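/- For each i ∈ {1,…,n}, let η_i be the least element (in the dominance order) of the set P_i of weights μ ∈ P(λ) whose α_i-coefficient equals m_i. Then (η_i, α_j) ≤ 0 for all j ≠ i and (η_i, α_i) > 0; consequently, the coordinate faces F_1, …, F_n are pairwise distinct. -/

import Mathlib

open RealInnerProductSpace

noncomputable section

variable {E : Type*} [NormedAddCommGroup E] [InnerProductSpace ℝ E] [FiniteDimensional ℝ E]

/-- Reflection in the hyperplane orthogonal to `β`. -/
def sref (β : E) : E ≃ₗᵢ[ℝ] E := Submodule.reflection (ℝ ∙ β)ᗮ

/-- Data of a system of simple roots of a (crystallographic, irreducible) root system: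
the simple roots form a basis of the euclidean space, Cartan integers are integral,
distinct simple roots have nonpositive inner products, and the Dynkin diagram is connected. -/
structure RootData (n : ℕ) (E : Type*) [NormedAddCommGroup E] [InnerProductSpace ℝ E] where
  α : Fin n → E
  b : Module.Basis (Fin n) ℝ E
  hb : ∀ i, b i = α i
  cartan : ∀ i j, ∃ z : ℤ, (z : ℝ) * ⟪α j, α j⟫ = 2 * ⟪α i, α j⟫
  offdiag : ∀ i j : Fin n, i ≠ j → ⟪α i, α j⟫ ≤ 0
  conn : ∀ i j : Fin n, Relation.ReflTransGen (fun a b => a ≠ b ∧ ⟪α a, α b⟫ ≠ 0) i j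

namespace RootData

variable {n : ℕ} (S : RootData n E)

/-- The simple reflections. -/
def s (i : Fin n) : E ≃ₗᵢ[ℝ] E := sref (S.α i)

/-- The Weyl group, generated by the simple reflections. -/
def W : Subgroup (E ≃ₗᵢ[ℝ] E) := Subgroup.closure (Set.range S.s)

/-- The standard parabolic subgroup generated by the simple reflections indexed by `I`. -/
def WI (I : Set (Fin n)) : Subgroup (E ≃ₗᵢ[ℝ] E) := Subgroup.closure (S.s '' I)

/-- The set of roots:  the Weyl group orbit of the simple roots. -/
def roots : Set E := {β | ∃ w ∈ S.W, ∃ i, β = w (S.α i)}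

/-- `x` is dominant: nonnegative inner product with every simple root. -/
def Dominant (x : E) : Prop := ∀ i, 0 ≤ ⟪x, S.α i⟫

/-- The dominant weight `λ = Σ mᵢ αᵢ` (with nonnegative integer coefficients). -/
def lam (m : Fin n → ℕ) : E := ∑ j, (m j : ℝ) • S.α j

/-- `λ` is an integral weight: `2(λ,αᵢ)/(αᵢ,αᵢ)` is a (nonnegative) integer. -/
def IntegralDom (m : Fin n → ℕ) : Prop :=
  ∀ i, ∃ z : ℕ, (z : ℝ) * ⟪S.α i, S.α i⟫ = 2 * ⟪S.lam m, S.α i⟫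

/-- The Weyl group orbit of a point. -/
def orbit (x : E) : Set E := (fun w : E ≃ₗᵢ[ℝ] E => w x) '' (S.W : Set (E ≃ₗᵢ[ℝ] E))

/-- The weight polytope: the convex hull of the Weyl group orbit of `λ`. -/
def poly (m : Fin n → ℕ) : Set E := convexHull ℝ (S.orbit (S.lam m))

/-- `c μ i` is the coefficient of `αᵢ` when `μ` is expressed in the basis of simple roots. -/
def c (μ : E) (i : Fin n) : ℝ := S.b.repr μ i

/-- The set of weights `P(λ)`:  points of the weight polytope lying in the root lattice. -/
def Pw (m : Fin n → ℕ) : Set E := {μ ∈ S.poly m | ∀ i, ∃ z : ℤ, S.c μ i = z}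

/-- `P_I`: the weights whose `αᵢ`-coefficient equals `mᵢ` for all `i ∈ I`. -/
def P_ (m : Fin n → ℕ) (I : Set (Fin n)) : Set E :=
  {μ ∈ S.Pw m | ∀ i ∈ I, S.c μ i = m i}

/-- The standard parabolic face `F_I` of the weight polytope. -/
def F_ (m : Fin n → ℕ) (I : Set (Fin n)) : Set E :=
  {x ∈ S.poly m | ∀ i ∈ I, S.c x i = m i}

/-- The dominance order: `μ ≤ ν` iff `ν - μ` is a nonnegative integral sum of simple roots. -/
def wle (μ ν : E) : Prop := ∃ a : Fin n → ℕ, ν - μ = ∑ i, (a i : ℝ) • S.α i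

/-- Adjacency in the extended Dynkin diagram with extra node `-λ` (encoded as `none`). -/
def adj (m : Fin n → ℕ) : Option (Fin n) → Option (Fin n) → Prop
  | none, none => False
  | none, some j => 0 < ⟪S.lam m, S.α j⟫
  | some i, none => 0 < ⟪S.lam m, S.α i⟫
  | some i, some j => i ≠ j ∧ ⟪S.α i, S.α j⟫ ≠ 0

/-- One step in the extended Dynkin diagram, staying within the vertices `{-λ} ∪ {αₖ : k ∈ K}`. -/
def within (m : Fin n → ℕ) (K : Set (Fin n)) (a b : Option (Fin n)) : Prop :=
  S.adj m a b ∧ (∀ i, a = some i → i ∈ K) ∧ (∀ i, b = some i → i ∈ K)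

/-- `I̅⁰`: indices of the simple roots in the connected component of `-λ` in the subdiagram
of the extended Dynkin diagram on the complement of `I` together with `-λ`. -/
def comp0 (m : Fin n → ℕ) (I : Set (Fin n)) : Set (Fin n) :=
  {j | j ∉ I ∧ Relation.ReflTransGen (S.within m Iᶜ) none (some j)}

/-- The subdiagram of the extended Dynkin diagram on `{-λ} ∪ {αₖ : k ∈ K}` is connected. -/
def ConnWith (m : Fin n → ℕ) (K : Set (Fin n)) : Prop :=
  ∀ j ∈ K, Relation.ReflTransGen (S.within m K) none (some j)

/-- `ω` is the `i`-th fundamental coweight: `(ω, αⱼ) = δᵢⱼ`. -/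
def IsCoweight (i : Fin n) (ω : E) : Prop :=
  ∀ j, ⟪ω, S.α j⟫ = if j = i then 1 else 0

end RootData

variable {n : ℕ}

/-! Reflecting the least element `η` of `P_i` in a simple root `αⱼ` with `j ≠ i` stays in `P_i`
and moves `η` by `-⟨η, αⱼ^∨⟩ αⱼ`, so minimality forces `(η, αⱼ) ≤ 0`. If also `(η, αᵢ) ≤ 0`,
then `λ - η` is dominant, lies in the positive root cone and has vanishing `αᵢ`-coefficient;
since the Dynkin diagram is connected this forces `λ = η`, so `λ` is orthogonal to every simple
root and vanishes. Finally `η ∈ F_i` with `(η, αᵢ) > 0`: if `F_i = F_j`, then `sᵢ η ∈ F_j = F_i`,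
although `sᵢ` strictly lowers the `αᵢ`-coefficient. -/

namespace RootData

variable {E : Type*} [NormedAddCommGroup E] [InnerProductSpace ℝ E] (S : RootData n E)

lemma α_ne_zero (k : Fin n) : S.α k ≠ 0 := S.hb k ▸ S.b.ne_zero k

lemma inner_α_self_pos (k : Fin n) : 0 < ⟪S.α k, S.α k⟫ := real_inner_self_pos.mpr (S.α_ne_zero k)

lemma sref_apply {β : E} (hβ : β ≠ 0) (x : E) :
    sref β x = x - (2 * ⟪x, β⟫ / ⟪β, β⟫) • β := by
  have hβ' : ‖β‖ ≠ 0 := norm_ne_zero_iff.mpr hβ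
  rw [sref, Submodule.reflection_orthogonal_apply, Submodule.reflection_apply,
    Submodule.starProjection_singleton, real_inner_comm β x, real_inner_self_eq_norm_sq]
  simp only [RCLike.ofReal_real_eq_id, id_eq]
  match_scalars
  field_simp
  all_goals ring

lemma s_apply (k : Fin n) (x : E) :
    S.s k x = x - (2 * ⟪x, S.α k⟫ / ⟪S.α k, S.α k⟫) • S.α k :=
  sref_apply (S.α_ne_zero k) x

lemma c_sub (x y : E) (k : Fin n) : S.c (x - y) k = S.c x k - S.c y k := by
  simp [c]

lemma c_sum_smul (f : Fin n → ℝ) (l : Fin n) : S.c (∑ k, f k • S.α k) l = f l := by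
  simp only [c, ← S.hb, S.b.repr_sum_self]

lemma c_lam (m : Fin n → ℕ) (k : Fin n) : S.c (S.lam m) k = m k := S.c_sum_smul _ k

lemma c_s_apply (k : Fin n) (x : E) (l : Fin n) :
    S.c (S.s k x) l = S.c x l - if l = k then 2 * ⟪x, S.α k⟫ / ⟪S.α k, S.α k⟫ else 0 := by
  rw [S.s_apply, S.c_sub]
  simp [c, ← S.hb, Finsupp.single_apply, eq_comm]

lemma c_s_apply_of_ne {k l : Fin n} (h : l ≠ k) (x : E) : S.c (S.s k x) l = S.c x l := by
  rw [S.c_s_apply, if_neg h, sub_zero]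

lemma inner_α_eq_sum_c (x : E) (l : Fin n) : ⟪x, S.α l⟫ = ∑ k, S.c x k * ⟪S.α k, S.α l⟫ := by
  conv_lhs => rw [← S.b.sum_repr x]
  simp [sum_inner, real_inner_smul_left, S.hb, c]

lemma eq_zero_of_forall_inner_α_eq_zero {x : E} (h : ∀ l, ⟪x, S.α l⟫ = 0) : x = 0 := by
  have hxx : ⟪x, x⟫ = 0 := by
    conv_lhs => arg 3; rw [← S.b.sum_repr x]
    simp only [inner_sum, real_inner_smul_right, S.hb, h, mul_zero, Finset.sum_const_zero]
  exact inner_self_eq_zero.mp hxx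

lemma exists_int_two_inner_div {x : E} (hx : ∀ l, ∃ z : ℤ, S.c x l = z) (k : Fin n) :
    ∃ z : ℤ, 2 * ⟪x, S.α k⟫ / ⟪S.α k, S.α k⟫ = z := by
  choose zc hzc using hx
  choose zk hzk using fun l => S.cartan l k
  refine ⟨∑ l, zc l * zk l, ?_⟩
  rw [div_eq_iff (S.inner_α_self_pos k).ne', S.inner_α_eq_sum_c x k, Finset.mul_sum]
  push_cast
  rw [Finset.sum_mul]
  refine Finset.sum_congr rfl fun l _ => ?_
  rw [hzc l, mul_assoc, hzk l]
  ring

lemma eq_zero_of_dominant_of_adjacent {a : Fin n → ℝ} (ha : ∀ k, 0 ≤ a k)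
    (hdom : S.Dominant (∑ k, a k • S.α k)) {k l : Fin n} (hl : a l = 0)
    (hkl : ⟪S.α l, S.α k⟫ ≠ 0) : a k = 0 := by
  have hterm : ∀ j ∈ Finset.univ, a j * ⟪S.α j, S.α l⟫ ≤ 0 := by
    intro j _
    by_cases hjl : j = l
    · simp [hjl, hl]
    · exact mul_nonpos_of_nonneg_of_nonpos (ha j) (S.offdiag j l hjl)
  have hsum : ∑ j, a j * ⟪S.α j, S.α l⟫ = 0 := by
    refine le_antisymm (Finset.sum_nonpos hterm) ?_
    have hl := hdom l
    rwa [S.inner_α_eq_sum_c, Finset.sum_congr rfl fun j _ => by rw [S.c_sum_smul]] at hl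
  have hk := (Finset.sum_eq_zero_iff_of_nonpos hterm).mp hsum k (Finset.mem_univ k)
  rw [real_inner_comm] at hkl
  exact (mul_eq_zero.mp hk).resolve_right hkl

lemma eq_zero_of_dominant_of_eq_zero {a : Fin n → ℝ} (ha : ∀ k, 0 ≤ a k)
    (hdom : S.Dominant (∑ k, a k • S.α k)) {i : Fin n} (hi : a i = 0) (l : Fin n) : a l = 0 := by
  induction S.conn i l with
  | refl => exact hi
  | tail _ hadj ih => exact S.eq_zero_of_dominant_of_adjacent ha hdom ih hadj.2

lemma c_le_of_wle {μ ν : E} (h : S.wle μ ν) (k : Fin n) : S.c μ k ≤ S.c ν k := by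
  obtain ⟨a, ha⟩ := h
  have hk := congrArg (S.c · k) ha
  simp only [S.c_sub, S.c_sum_smul] at hk
  linarith [(a k).cast_nonneg (α := ℝ)]

lemma inner_α_nonpos_of_wle_s {x : E} {k : Fin n} (h : S.wle x (S.s k x)) :
    ⟪x, S.α k⟫ ≤ 0 := by
  have hk := S.c_le_of_wle h k
  rw [S.c_s_apply, if_pos rfl, le_sub_self_iff] at hk
  by_contra! hpos
  exact hk.not_gt (div_pos (by linarith) (S.inner_α_self_pos k))

lemma s_mem_poly (m : Fin n → ℕ) (k : Fin n) {x : E} (hx : x ∈ S.poly m) :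
    S.s k x ∈ S.poly m := by
  have hsW : S.s k ∈ S.W := Subgroup.subset_closure (Set.mem_range_self k)
  have horbit : S.s k '' S.orbit (S.lam m) ⊆ S.orbit (S.lam m) := by
    rintro _ ⟨_, ⟨w, hw, rfl⟩, rfl⟩
    exact ⟨S.s k * w, mul_mem hsW hw, rfl⟩
  have himage := Set.mem_image_of_mem (S.s k).toLinearEquiv.toLinearMap hx
  rw [poly, LinearMap.image_convexHull] at himage
  exact convexHull_mono horbit himage

lemma lam_mem_P (m : Fin n → ℕ) (I : Set (Fin n)) : S.lam m ∈ S.P_ m I :=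
  ⟨⟨subset_convexHull ℝ _ ⟨1, one_mem S.W, rfl⟩, fun k => ⟨m k, by simp [S.c_lam]⟩⟩,
    fun k _ => S.c_lam m k⟩

lemma s_mem_F {m : Fin n → ℕ} {I : Set (Fin n)} {k : Fin n} (hk : k ∉ I) {x : E}
    (hx : x ∈ S.F_ m I) : S.s k x ∈ S.F_ m I :=
  ⟨S.s_mem_poly m k hx.1, fun l hl => by
    rw [S.c_s_apply_of_ne (ne_of_mem_of_not_mem hl hk)]
    exact hx.2 l hl⟩

lemma s_mem_P {m : Fin n → ℕ} {I : Set (Fin n)} {k : Fin n} (hk : k ∉ I) {x : E}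
    (hx : x ∈ S.P_ m I) : S.s k x ∈ S.P_ m I := by
  obtain ⟨⟨hpoly, hlattice⟩, hcoeff⟩ := hx
  obtain ⟨z, hz⟩ := S.exists_int_two_inner_div hlattice k
  refine ⟨⟨S.s_mem_poly m k hpoly, fun l => ?_⟩,
    (S.s_mem_F hk ⟨hpoly, hcoeff⟩).2⟩
  obtain ⟨zl, hzl⟩ := hlattice l
  refine ⟨zl - if l = k then z else 0, ?_⟩
  rw [S.c_s_apply, hzl, hz]
  split_ifs <;> simp

lemma inner_α_nonpos_of_isLeast {m : Fin n → ℕ} {i : Fin n} {η : E} (hη : η ∈ S.P_ m {i})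
    (hleast : ∀ μ ∈ S.P_ m {i}, S.wle η μ) {j : Fin n} (hj : j ≠ i) : ⟪η, S.α j⟫ ≤ 0 :=
  S.inner_α_nonpos_of_wle_s (hleast _ (S.s_mem_P (Set.notMem_singleton_iff.mpr hj) hη))

lemma inner_α_pos_of_isLeast {m : Fin n → ℕ} (hdom : S.Dominant (S.lam m)) (hlam : S.lam m ≠ 0)
    {i : Fin n} {η : E} (hη : η ∈ S.P_ m {i}) (hleast : ∀ μ ∈ S.P_ m {i}, S.wle η μ) :
    0 < ⟪η, S.α i⟫ := by
  by_contra! hi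
  have hanti : ∀ l, ⟪η, S.α l⟫ ≤ 0 := fun l =>
    if hl : l = i then hl ▸ hi else S.inner_α_nonpos_of_isLeast hη hleast hl
  obtain ⟨a, ha⟩ := hleast _ (S.lam_mem_P m {i})
  have hai : (a i : ℝ) = 0 := by
    simpa [S.c_sub, S.c_lam, hη.2 i rfl, S.c_sum_smul] using (congrArg (S.c · i) ha).symm
  have hdiff : S.Dominant (∑ k, (a k : ℝ) • S.α k) := fun l => by
    rw [← ha, inner_sub_left]
    linarith [hdom l, hanti l]
  have hlam_eq : S.lam m = η := by
    have hzero := S.eq_zero_of_dominant_of_eq_zero (fun k => (a k).cast_nonneg) hdiff hai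
    simpa [hzero, sub_eq_zero] using ha
  refine hlam (S.eq_zero_of_forall_inner_α_eq_zero fun l => le_antisymm ?_ (hdom l))
  exact hlam_eq ▸ hanti l

lemma F_singleton_ne {m : Fin n → ℕ} {i j : Fin n} {η : E} (hη : η ∈ S.F_ m {i})
    (hpos : 0 < ⟪η, S.α i⟫) (hj : j ≠ i) : S.F_ m {i} ≠ S.F_ m {j} := by
  intro hF
  have hsη : S.s i η ∈ S.F_ m {i} :=
    hF ▸ S.s_mem_F (Set.notMem_singleton_iff.mpr hj.symm) (hF ▸ hη)
  have hci := hsη.2 i rfl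
  rw [S.c_s_apply, if_pos rfl, hη.2 i rfl, sub_eq_self] at hci
  exact (div_pos (by linarith) (S.inner_α_self_pos i)).ne' hci

end RootData

theorem coordinate_faces_distinct_general (S : RootData n E) (m : Fin n → ℕ)
    (hdom : S.Dominant (S.lam m)) (hlam : S.lam m ≠ 0)
    (i : Fin n) (η : E) (hη : η ∈ S.P_ m {i}) (hleast : ∀ μ ∈ S.P_ m {i}, S.wle η μ) :
    (∀ j, j ≠ i → ⟪η, S.α j⟫ ≤ 0) ∧ 0 < ⟪η, S.α i⟫ ∧
      (∀ j, j ≠ i → S.F_ m {i} ≠ S.F_ m {j}) := by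
  have hpos := S.inner_α_pos_of_isLeast hdom hlam hη hleast
  exact ⟨fun j hj => S.inner_α_nonpos_of_isLeast hη hleast hj, hpos,
    fun j hj => S.F_singleton_ne ⟨hη.1.1, hη.2⟩ hpos hj⟩

/-- if `ηᵢ` is the least element of `P_i` in the dominance order, then
`(ηᵢ, αⱼ) ≤ 0` for `j ≠ i` and `(ηᵢ, αᵢ) > 0`; consequently the coordinate faces are
pairwise distinct. -/
theorem coordinate_faces_distinct (S : RootData n E) (m : Fin n → ℕ)
    (hdom : S.Dominant (S.lam m)) (hint : S.IntegralDom m) (hlam : S.lam m ≠ 0)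
    (i : Fin n) (η : E) (hη : η ∈ S.P_ m {i}) (hleast : ∀ μ ∈ S.P_ m {i}, S.wle η μ) :
    (∀ j, j ≠ i → ⟪η, S.α j⟫ ≤ 0) ∧ 0 < ⟪η, S.α i⟫ ∧
      (∀ j, j ≠ i → S.F_ m {i} ≠ S.F_ m {j}) :=
  coordinate_faces_distinct_general S m hdom hlam i η hη hleast
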